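/- With the telescoping identity above, the minimum over all policies π : 𝒳 → {subsets} of the empirical loss Σ_i L_{π(x_i)}(x_i, y_i) equals the minimum over all collections of DAG decision functions (π_1,...,π_K) of the empirical path risk Σ_i R(x_i, y_i, π_1,...,π_K), provided the DAG contains, for every subset s, a path from the empty set to s followed by a classification edge, and the policy classes are all functions. -/

import Mathlib

/-- Path risk (eq. 6) of a DAG decision policy `δ` over all `2^M` sensor subsets,
starting at subset `s` with `n` acquisition steps of fuel remaining: `δ s x = some u`
acquires sensor `u ∉ s` (cost `c u`), `δ s x = none` stops and classifies (cost
`1[f_s(x) ≠ y]`); when all sensors are acquired the policy must classify. -/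
noncomputable def dagRisk {X Y U : Type*} [DecidableEq U] [DecidableEq Y]
    (c : U → ℝ) (f : Finset U → X → Y) (x : X) (y : Y)
    (δ : Finset U → X → Option U) : ℕ → Finset U → ℝ
  | 0, s => if f s x ≠ y then 1 else 0
  | n + 1, s =>
    match δ s x with
    | none => if f s x ≠ y then 1 else 0
    | some u => c u + dagRisk c f x y δ n (insert u s)

/-- Terminal subset reached by policy `δ` on input `x` from `s` with fuel `n`. -/
noncomputable def dagReach {X U : Type*} [DecidableEq U]
    (δ : Finset U → X → Option U) (x : X) : ℕ → Finset U → Finset U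
  | 0, s => s
  | n + 1, s => (δ s x).elim s (fun u => dagReach δ x n (insert u s))

lemma subset_dagReach {X U : Type*} [DecidableEq U]
    (δ : Finset U → X → Option U) (x : X) :
    ∀ n s, s ⊆ dagReach δ x n s := by
  intro n
  induction n with
  | zero => intro s; simp [dagReach]
  | succ n ih =>
    intro s
    simp only [dagReach]
    rcases Option.eq_none_or_eq_some (δ s x) with hd | ⟨u, hd⟩ <;> simp only [hd]
    · exact subset_rfl
    · exact (Finset.subset_insert u s).trans (ih _)

lemma dagRisk_eq_loss {X Y U : Type*} [DecidableEq U] [DecidableEq Y]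
    (c : U → ℝ) (f : Finset U → X → Y) (x : X) (y : Y)
    (δ : Finset U → X → Option U)
    (hδ : ∀ s u, δ s x = some u → u ∉ s) :
    ∀ n s, dagRisk c f x y δ n s =
      (if f (dagReach δ x n s) x ≠ y then 1 else 0) +
        ∑ k ∈ dagReach δ x n s \ s, c k := by
  intro n
  induction n with
  | zero => intro s; simp [dagRisk, dagReach]; split_ifs <;> simp_all
  | succ n ih =>
    intro s
    simp only [dagRisk, dagReach]
    rcases Option.eq_none_or_eq_some (δ s x) with hd | ⟨u, hd⟩ <;> simp only [hd]
    · simp; split_ifs <;> simp_all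
    · simp only [Option.elim]
      rw [ih (insert u s)]
      have h := hd
      have hus : u ∉ s := hδ s u h
      clear hd
      have huR : u ∈ dagReach δ x n (insert u s) :=
        subset_dagReach δ x n (insert u s) (Finset.mem_insert_self u s)
      have hset : dagReach δ x n (insert u s) \ s
          = insert u (dagReach δ x n (insert u s) \ insert u s) := by
        ext a
        simp only [Finset.mem_sdiff, Finset.mem_insert]
        constructor
        · rintro ⟨ha, has⟩
          by_cases hau : a = u
          · exact Or.inl hau
          · exact Or.inr ⟨ha, fun hh => hh.elim hau has⟩
        · rintro (rfl | ⟨ha, has⟩)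
          · exact ⟨huR, hus⟩
          · exact ⟨ha, fun hh => has (Or.inr hh)⟩
      rw [hset, Finset.sum_insert (by simp)]
      split_ifs <;> simp_all <;> ring

lemma dagReach_pi {X U : Type*} [DecidableEq U] (π : X → Finset U) (x : X) :
    ∀ n s, s ⊆ π x → (π x \ s).card ≤ n →
      dagReach (fun s x' => if h : (π x' \ s).Nonempty then some h.choose else none)
        x n s = π x := by
  intro n
  induction n with
  | zero =>
    intro s hs hcard
    have : π x \ s = ∅ := Finset.card_eq_zero.mp (Nat.le_zero.mp hcard)
    have h2 : π x ⊆ s := by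
      intro a ha
      by_contra has
      have : a ∈ π x \ s := Finset.mem_sdiff.mpr ⟨ha, has⟩
      simp [‹π x \ s = ∅›] at this
    exact Finset.Subset.antisymm hs h2 ▸ rfl
  | succ n ih =>
    intro s hs hcard
    simp only [dagReach]
    by_cases h : (π x \ s).Nonempty
    · rw [dif_pos h]
      simp only [Option.elim]
      have hu := h.choose_spec
      rw [Finset.mem_sdiff] at hu
      apply ih
      · exact Finset.insert_subset hu.1 hs
      · rw [Finset.sdiff_insert, Finset.card_erase_of_mem (Finset.mem_sdiff.mpr hu)]
        omega
    · rw [dif_neg h]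
      simp only [Option.elim]
      have : π x \ s = ∅ := Finset.not_nonempty_iff_eq_empty.mp h
      have h2 : π x ⊆ s := by
        intro a ha
        by_contra has
        have : a ∈ π x \ s := Finset.mem_sdiff.mpr ⟨ha, has⟩
        simp [‹π x \ s = ∅›] at this
      exact Finset.Subset.antisymm hs h2

/-- the minimum of the subset-selection empirical loss (eq. 4) over all
policies `π : 𝒳 → subsets` equals the minimum of the DAG empirical path risk (eq. 6)
over all collections of node decision functions. -/
theorem subset_erm_eq_dag_erm {X Y U : Type*} [Fintype U] [DecidableEq U] [DecidableEq Y]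
    (c : U → ℝ) (hc : ∀ u, 0 ≤ c u)
    (f : Finset U → X → Y)
    (L : Finset U → X → Y → ℝ)
    (hL : ∀ s x' y', L s x' y' = (if f s x' ≠ y' then (1 : ℝ) else 0) + ∑ k ∈ s, c k)
    (n : ℕ) (x : Fin n → X) (y : Fin n → Y) :
    sInf {r : ℝ | ∃ π : X → Finset U, r = ∑ i : Fin n, L (π (x i)) (x i) (y i)} =
      sInf {r : ℝ | ∃ δ : Finset U → X → Option U,
        (∀ (s : Finset U) (x' : X) (u : U), δ s x' = some u → u ∉ s) ∧
        r = ∑ i : Fin n, dagRisk c f (x i) (y i) δ (Fintype.card U) ∅} := by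
  congr 1
  ext r
  simp only [Set.mem_setOf_eq]
  constructor
  · rintro ⟨π, rfl⟩
    refine ⟨fun s x' => if h : (π x' \ s).Nonempty then some h.choose else none,
      ?_, ?_⟩
    · intro s x' u hu
      rw [dite_eq_iff] at hu
      rcases hu with ⟨h, hh⟩ | ⟨h, hh⟩
      · have := h.choose_spec
        rw [Finset.mem_sdiff] at this
        rw [Option.some_inj] at hh
        exact hh ▸ this.2
      · exact absurd hh (by simp)
    · refine Finset.sum_congr rfl fun i _ => ?_
      rw [hL, dagRisk_eq_loss _ _ _ _ _ (fun s u hu => by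
        rw [dite_eq_iff] at hu
        rcases hu with ⟨h, hh⟩ | ⟨h, hh⟩
        · have := h.choose_spec
          rw [Finset.mem_sdiff] at this
          rw [Option.some_inj] at hh
          exact hh ▸ this.2
        · exact absurd hh (by simp)),
        dagReach_pi π (x i) (Fintype.card U) ∅ (Finset.empty_subset _)
          (by simpa using Finset.card_le_univ (π (x i)))]
      simp
  · rintro ⟨δ, hδ, rfl⟩
    refine ⟨fun x' => dagReach δ x' (Fintype.card U) ∅, ?_⟩
    refine Finset.sum_congr rfl fun i _ => ?_
    rw [hL, dagRisk_eq_loss _ _ _ _ _ (fun s u hu => hδ s (x i) u hu)]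
    simp
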